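/- arXiv:1104.5336 — 7 statements merged into one kernel-verified Lean document; each statement's English description precedes it below -/
import Mathlib

section
/- Let Y be a rational vector space, f : ℝ → Y, s ≥ 1, and let I_1, ..., I_s be nonempty open intervals of ℝ. If the iterated difference Δ_{h_1} Δ_{h_2} ⋯ Δ_{h_s} f(x) = 0 for all x ∈ ℝ and all h_k ∈ I_k (k = 1, ..., s), then Δ_{h_1} ⋯ Δ_{h_s} f(x) = 0 for all x, h_1, ..., h_s ∈ ℝ. -/
/-- The difference operator `Δ_h f (x) = f (x + h) - f x`. -/
def dd {X Y : Type*} [Add X] [Sub Y] (h : X) (f : X → Y) : X → Y :=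
  fun x => f (x + h) - f x

/-- Iterated difference `Δ_{h₁}(Δ_{h₂ ⋯ hₛ} f)` for a list of steps. -/
def ddIter {X Y : Type*} [Add X] [Sub Y] (hs : List X) (f : X → Y) : X → Y :=
  hs.foldr dd f

lemma dd_comm {Y : Type*} [AddCommGroup Y] (t u : ℝ) (f : ℝ → Y) :
    dd t (dd u f) = dd u (dd t f) := by
  funext x
  simp only [dd, add_right_comm x u t]
  abel

lemma ddIter_dd {Y : Type*} [AddCommGroup Y] (l : List ℝ) (t : ℝ) (f : ℝ → Y) :
    ddIter l (dd t f) = dd t (ddIter l f) := by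
  induction l with
  | nil => rfl
  | cons a l ih =>
    show dd a (ddIter l (dd t f)) = dd t (dd a (ddIter l f))
    rw [ih, dd_comm]

lemma ddIter_set {Y : Type*} [AddCommGroup Y] (l : List ℝ) (n : ℕ) (hn : n < l.length)
    (t : ℝ) (f : ℝ → Y) :
    ddIter (l.set n t) f = dd t (ddIter (l.eraseIdx n) f) := by
  induction l generalizing n with
  | nil => simp at hn
  | cons a l ih =>
    cases n with
    | zero => rfl
    | succ n =>
      show dd a (ddIter (l.set n t) f) = dd t (dd a (ddIter (l.eraseIdx n) f))
      rw [ih n (by simpa using hn), dd_comm]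

lemma ofFn_update {s : ℕ} (h : Fin s → ℝ) (j : Fin s) (t : ℝ) :
    List.ofFn (Function.update h j t) = (List.ofFn h).set j.val t := by
  apply List.ext_getElem
  · simp
  · intro n h1 h2
    simp only [List.getElem_ofFn, List.getElem_set, List.getElem_ofFn]
    rcases eq_or_ne n j.val with rfl | hne
    · have hfin : (⟨(j : ℕ), by simpa using h1⟩ : Fin s) = j := Fin.ext rfl
      rw [hfin]
      simp
    · have hfin : (⟨n, by simpa using h1⟩ : Fin s) ≠ j := by
        simp [Fin.ext_iff, hne]
      rw [Function.update_of_ne hfin, if_neg (Ne.symm hne)]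

/-- If `Δ_t g = 0` for all `t` in a nonempty open interval, then for all `t`. -/
lemma lemA {Y : Type*} [AddCommGroup Y] [Module ℚ Y] (g : ℝ → Y) (a b : ℝ) (hab : a < b)
    (H : ∀ t ∈ Set.Ioo a b, ∀ x, g (x + t) = g x) :
    ∀ t x, g (x + t) = g x := by
  set S : AddSubgroup ℝ :=
    { carrier := {t | ∀ x, g (x + t) = g x}
      zero_mem' := by intro x; simp
      add_mem' := by
        intro t u ht hu x
        rw [← add_assoc, hu, ht]
      neg_mem' := by
        intro t ht x
        have := ht (x + -t)
        rw [neg_add_cancel_right] at this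
        exact this.symm } with hS
  have hmem : ∀ t ∈ Set.Ioo a b, t ∈ S := fun t ht => H t ht
  have hsmall : ∀ t : ℝ, |t| < (b - a) / 2 → t ∈ S := by
    intro t ht
    have habs := abs_lt.mp ht
    have hmid : (a + b) / 2 ∈ Set.Ioo a b := ⟨by linarith, by linarith⟩
    have h2 : (a + b) / 2 + t ∈ Set.Ioo a b := ⟨by linarith, by linarith⟩
    have := S.sub_mem (hmem _ h2) (hmem _ hmid)
    simpa using this
  intro t
  have hba : (0 : ℝ) < (b - a) / 2 := by linarith
  obtain ⟨n, hn⟩ := exists_nat_gt (|t| / ((b - a) / 2))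
  have hpos : (0 : ℝ) < (n : ℝ) + 1 := by positivity
  have hsm : |t / ((n : ℝ) + 1)| < (b - a) / 2 := by
    rw [abs_div, abs_of_pos hpos, div_lt_iff₀ hpos]
    have h1 : |t| < (n : ℝ) * ((b - a) / 2) := by
      rwa [div_lt_iff₀ hba] at hn
    nlinarith [Nat.cast_nonneg (α := ℝ) n]
  have hts : t / ((n : ℝ) + 1) ∈ S := hsmall _ hsm
  have hmem2 : ((n + 1) : ℕ) • (t / ((n : ℝ) + 1)) ∈ S := S.nsmul_mem hts _
  have heq : ((n + 1) : ℕ) • (t / ((n : ℝ) + 1)) = t := by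
    rw [nsmul_eq_mul]
    push_cast
    field_simp
  rwa [heq] at hmem2

theorem stmt2 {Y : Type*} [AddCommGroup Y] [Module ℚ Y] (f : ℝ → Y)
    (s : ℕ) (hs : 1 ≤ s) (a b : Fin s → ℝ) (hab : ∀ k, a k < b k)
    (H : ∀ x : ℝ, ∀ h : Fin s → ℝ, (∀ k, h k ∈ Set.Ioo (a k) (b k)) →
      ddIter (List.ofFn h) f x = 0) :
    ∀ (x : ℝ) (h : Fin s → ℝ), ddIter (List.ofFn h) f x = 0 := by
  suffices key : ∀ k : ℕ, ∀ (x : ℝ) (h : Fin s → ℝ),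
      (∀ j : Fin s, k ≤ (j : ℕ) → h j ∈ Set.Ioo (a j) (b j)) →
      ddIter (List.ofFn h) f x = 0 by
    intro x h
    exact key s x h (fun j hj => absurd hj (by omega))
  intro k
  induction k with
  | zero => exact fun x h hh => H x h (fun j => hh j (Nat.zero_le _))
  | succ k ih =>
    intro x h hh
    rcases le_or_gt s k with hks | hks
    · exact ih x h (fun j hj => hh j (by omega))
    · set j0 : Fin s := ⟨k, hks⟩ with hj0
      set g : ℝ → Y := ddIter ((List.ofFn h).eraseIdx k) f with hg
      have hlen : k < (List.ofFn h).length := by simpa using hks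
      have hdd : ∀ t : ℝ, ddIter (List.ofFn (Function.update h j0 t)) f = dd t g := by
        intro t
        rw [ofFn_update, ddIter_set _ _ hlen]
      have hIoo : ∀ t ∈ Set.Ioo (a j0) (b j0), ∀ y, g (y + t) = g y := by
        intro t ht y
        have h1 : ddIter (List.ofFn (Function.update h j0 t)) f y = 0 := by
          apply ih
          intro j hj
          rcases eq_or_ne j j0 with rfl | hne
          · simpa using ht
          · rw [Function.update_of_ne hne]
            apply hh
            have : (j : ℕ) ≠ k := fun hc => hne (Fin.ext hc)
            omega
        rw [hdd] at h1
        exact sub_eq_zero.mp h1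
      have hall : ∀ t y, g (y + t) = g y := lemA g _ _ (hab j0) hIoo
      have h2 : ddIter (List.ofFn h) f = dd (h j0) g := by
        conv_lhs => rw [← Function.update_eq_self j0 h]
        exact hdd _
      rw [h2]
      show g (x + h j0) - g x = 0
      rw [hall, sub_self]
end

section
/- For any function f : X → Y between rational vector spaces, any s ≥ 1, any x ∈ X and h_1, ..., h_s ∈ X: Δ_{h_1} ⋯ Δ_{h_s} f(x) = ∑_{(ε_1,...,ε_s) ∈ {0,1}^s} (-1)^{ε_1 + ⋯ + ε_s} Δ_{α(ε)}^s f(x + β(ε)), where α(ε) = -∑_{r=1}^s (ε_r/r) h_r and β(ε) = ∑_{r=1}^s ε_r h_r. -/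
lemma sign_eq {s : ℕ} (ε : Fin s → Bool) :
    ((-1 : ℤ) ^ (Finset.univ.filter fun r => ε r).card)
      = ∏ r, (if ε r then (-1 : ℤ) else 1) := by
  rw [Finset.card_filter, ← Finset.prod_pow_eq_pow_sum]
  exact Finset.prod_congr rfl fun r _ => by cases hr : ε r <;> simp [hr]

lemma ddIter_ofFn_eq_sum {X Y : Type*} [AddCommGroup X] [AddCommGroup Y]
    (f : X → Y) (s : ℕ) (h : Fin s → X) (x : X) :
    ddIter (List.ofFn h) f x
      = ∑ ε : Fin s → Bool,
          ((-1 : ℤ) ^ s * ∏ r, (if ε r then (-1 : ℤ) else 1)) •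
            f (x + ∑ r, if ε r then h r else 0) := by
  induction s generalizing x with
  | zero => simp [ddIter]
  | succ n ih =>
      have hsplit : ddIter (List.ofFn h) f x
          = ddIter (List.ofFn fun i : Fin n => h i.succ) f (x + h 0)
            - ddIter (List.ofFn fun i : Fin n => h i.succ) f x := by
        rw [List.ofFn_succ]; rfl
      rw [hsplit, ih, ih]
      rw [← Equiv.sum_comp (Fin.consEquiv fun _ : Fin (n + 1) => Bool)
        (fun ε : Fin (n + 1) → Bool =>
          ((-1 : ℤ) ^ (n + 1) * ∏ r, (if ε r then (-1 : ℤ) else 1)) •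
            f (x + ∑ r, if ε r then h r else 0))]
      rw [Fintype.sum_prod_type, Fintype.sum_bool]
      simp only [Fin.consEquiv_apply, Fin.cons_zero, Fin.cons_succ, Fin.prod_univ_succ,
        Fin.sum_univ_succ, Bool.false_eq_true, if_true, if_false, zero_add]
      rw [sub_eq_add_neg, ← Finset.sum_neg_distrib]
      congr 1
      · refine Finset.sum_congr rfl fun ε _ => ?_
        congr 1
        · ring
        · rw [add_assoc]
      · refine Finset.sum_congr rfl fun ε _ => ?_
        rw [← neg_smul]
        congr 1
        ring

lemma sum_flip_eq_zero {Y : Type*} [AddCommGroup Y] [Module ℚ Y] {s : ℕ} (j : Fin s)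
    (g : (Fin s → Bool) → Y)
    (hg : ∀ ε, g (Function.update ε j (!ε j)) = g ε) :
    ∑ ε : Fin s → Bool, (∏ r, (if ε r then (-1 : ℤ) else 1)) • g ε = 0 := by
  set F : (Fin s → Bool) → Y :=
    fun ε => (∏ r, (if ε r then (-1 : ℤ) else 1)) • g ε with hF
  have hinv : Function.Involutive
      (fun ε : Fin s → Bool => Function.update ε j (!ε j)) := by
    intro ε
    funext r
    rcases eq_or_ne r j with rfl | hr
    · simp
    · simp [Function.update_of_ne hr]
  have key : ∀ ε, F (Function.update ε j (!ε j)) = -F ε := by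
    intro ε
    have e1 : (fun r => if Function.update ε j (!ε j) r then (-1 : ℤ) else 1)
        = Function.update (fun r => if ε r then (-1 : ℤ) else 1) j
            (if !ε j then (-1 : ℤ) else 1) := by
      funext r
      rcases eq_or_ne r j with rfl | hr
      · simp
      · simp [Function.update_of_ne hr]
    have h1 : (∏ r, if Function.update ε j (!ε j) r then (-1 : ℤ) else 1)
        = -∏ r, (if ε r then (-1 : ℤ) else 1) := by
      rw [e1, Finset.prod_update_of_mem (Finset.mem_univ j),
        ← Finset.mul_prod_erase _ _ (Finset.mem_univ j)]
      cases hj : ε j <;> simp [hj, Finset.sdiff_singleton_eq_erase]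
    simp only [hF]
    rw [h1, hg ε, neg_smul]
  have hsum : ∑ ε : Fin s → Bool, F ε = -∑ ε : Fin s → Bool, F ε := by
    calc ∑ ε : Fin s → Bool, F ε
        = ∑ ε : Fin s → Bool, F (Function.update ε j (!ε j)) := by
          exact (Equiv.sum_comp hinv.toPerm F).symm
      _ = ∑ ε : Fin s → Bool, -F ε := Finset.sum_congr rfl fun ε _ => key ε
      _ = -∑ ε : Fin s → Bool, F ε := by rw [Finset.sum_neg_distrib]
  have h2 : (2 : ℚ) • ∑ ε : Fin s → Bool, F ε = 0 := by
    rw [two_smul]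
    nth_rewrite 1 [hsum]
    exact neg_add_cancel _
  have h3 : ∑ ε : Fin s → Bool, F ε
      = (2 : ℚ)⁻¹ • ((2 : ℚ) • ∑ ε : Fin s → Bool, F ε) := by
    rw [smul_smul]; norm_num
  rw [h2, smul_zero] at h3
  exact h3

theorem stmt5 {X Y : Type*} [AddCommGroup X] [Module ℚ X] [AddCommGroup Y] [Module ℚ Y]
    (f : X → Y) (s : ℕ) (hs : 1 ≤ s) (x : X) (h : Fin s → X) :
    ddIter (List.ofFn h) f x =
      ∑ ε : Fin s → Bool,
        ((-1 : ℤ) ^ (Finset.univ.filter fun r => ε r).card) •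
          (dd (-(∑ r : Fin s, if ε r then (((r : ℕ) + 1 : ℚ)⁻¹) • h r else 0)))^[s] f
            (x + ∑ r : Fin s, if ε r then h r else 0) := by
  have hdd : ∀ a : X, dd (Y := Y) a = fwdDiff a := fun _ => rfl
  simp only [sign_eq, hdd, fwdDiff_iter_eq_sum_shift, Finset.smul_sum]
  rw [Finset.sum_comm]
  rw [Finset.sum_range_succ']
  have hzero : ∑ k ∈ Finset.range s, ∑ ε : Fin s → Bool,
      (∏ r, (if ε r then (-1 : ℤ) else 1)) •
        (((-1 : ℤ) ^ (s - (k + 1)) * (s.choose (k + 1) : ℤ)) •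
          f ((x + ∑ r : Fin s, if ε r then h r else 0)
            + (k + 1) • -(∑ r : Fin s, if ε r then (((r : ℕ) + 1 : ℚ)⁻¹) • h r else 0))) = 0 := by
    refine Finset.sum_eq_zero fun k hk => ?_
    have hks : k < s := Finset.mem_range.mp hk
    set j : Fin s := ⟨k, hks⟩ with hj
    have point_eq : ∀ (ε : Fin s → Bool) (b : Bool),
        (x + ∑ r : Fin s, if Function.update ε j b r then h r else 0)
          + (k + 1) • -(∑ r : Fin s,
              if Function.update ε j b r then (((r : ℕ) + 1 : ℚ)⁻¹) • h r else 0)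
        = (x + ∑ r ∈ Finset.univ \ {j}, if ε r then h r else 0)
          + (k + 1) • -(∑ r ∈ Finset.univ \ {j},
              if ε r then (((r : ℕ) + 1 : ℚ)⁻¹) • h r else 0) := by
      intro ε b
      have e1 : (fun r : Fin s => if Function.update ε j b r then h r else 0)
          = Function.update (fun r => if ε r then h r else 0) j (if b then h j else 0) := by
        funext r
        rcases eq_or_ne r j with rfl | hr
        · simp
        · simp [Function.update_of_ne hr]
      have e2 : (fun r : Fin s =>
            if Function.update ε j b r then (((r : ℕ) + 1 : ℚ)⁻¹) • h r else 0)
          = Function.update (fun r => if ε r then (((r : ℕ) + 1 : ℚ)⁻¹) • h r else 0) j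
              (if b then (((j : ℕ) + 1 : ℚ)⁻¹) • h j else 0) := by
        funext r
        rcases eq_or_ne r j with rfl | hr
        · simp
        · simp [Function.update_of_ne hr]
      rw [e1, e2, Finset.sum_update_of_mem (Finset.mem_univ j),
        Finset.sum_update_of_mem (Finset.mem_univ j)]
      cases b
      · simp
      · simp only [if_true]
        rw [← Nat.cast_smul_eq_nsmul ℚ, ← Nat.cast_smul_eq_nsmul ℚ]
        rw [smul_neg, smul_neg, smul_add, smul_smul]
        have hcoef : ((k + 1 : ℕ) : ℚ) * (((j : ℕ) + 1 : ℚ)⁻¹) = 1 := by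
          have : ((j : ℕ) : ℚ) = (k : ℚ) := by norm_num [hj]
          rw [this]
          push_cast
          rw [mul_inv_cancel₀]
          positivity
        rw [hcoef, one_smul]
        abel
    refine sum_flip_eq_zero j
      (fun ε => ((-1 : ℤ) ^ (s - (k + 1)) * (s.choose (k + 1) : ℤ)) •
        f ((x + ∑ r : Fin s, if ε r then h r else 0)
          + (k + 1) • -(∑ r : Fin s, if ε r then (((r : ℕ) + 1 : ℚ)⁻¹) • h r else 0)))
      fun ε => ?_
    have h1 := point_eq ε (!ε j)
    have h2 := point_eq ε (ε j)
    rw [Function.update_eq_self] at h2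
    beta_reduce
    rw [h1, ← h2]
  rw [hzero, zero_add]
  rw [ddIter_ofFn_eq_sum]
  refine Finset.sum_congr rfl fun ε _ => ?_
  simp only [Nat.choose_zero_right, Nat.sub_zero, Nat.cast_one, mul_one, zero_smul, add_zero,
    smul_smul]
  congr 1
  ring
end

section
/- Let Y be a rational vector space, f : ℝ → Y, s ≥ 1, and δ > 0. If Δ_h^s f(x) = 0 for all x ∈ ℝ and all h ∈ (-δ, 0), then Δ_{h_1} ⋯ Δ_{h_s} f(x) = 0 for all x, h_1, ..., h_s ∈ ℝ. -/
/-!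
Let the group algebra `ℚ[X]` act on `X → Y` by translations, so that `Δ_t` is the action of
`[t] - 1`, and let `J` be the ideal of elements killing `f`. Since `[u] - 1` divides `[k u] - 1`
for `k ∈ ℤ` and every nonzero real is an integer multiple of some `u ∈ (-δ, 0)`, `J` contains
`([t] - 1)^s` for every `t`. Let `G` be the group generated by `h₁, …, hₛ`. The ideal spanned by
the `[hᵢ] - 1` is finitely generated and lies in the radical of `J`, so all products of `N`
factors `[g] - 1` with `g ∈ G` lie in `J` for some `N`. Descending from `N` to `s`: once all
`(n + 1)`-fold products lie in `J`, the map `(g₁, …, gₙ) ↦ ∏ ([gⱼ] - 1)` into `ℚ[X] ⧸ J` is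
symmetric and additive in each variable, because
`[a + b] - 1 = ([a] - 1) + ([b] - 1) + ([a] - 1)([b] - 1)`; for `n ≥ s` it vanishes on the
diagonal, hence everywhere by polarization, as `n!` times its value at `(v₁, …, vₙ)` is an
alternating sum of its values at `(∑_{i ∈ S} vᵢ, …, ∑_{i ∈ S} vᵢ)`.
-/

open Finset Multiplicative Function
open scoped Nat

lemma Fintype.sum_ite_forall_notMem_neg_one_pow_card {α β : Type*} [Fintype α] [DecidableEq α]
    [Fintype β] (r : β → α) :
    ∑ δ : Finset α, (if ∀ j, r j ∉ δ then (-1 : ℤ) ^ #δ else 0) =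
      if Surjective r then 1 else 0 := by
  have hfilter : univ.filter (fun δ : Finset α => ∀ j, r j ∉ δ) = (univ.image r)ᶜ.powerset := by
    ext δ
    simp only [mem_filter, mem_univ, true_and, mem_powerset, subset_compl_iff_disjoint_right,
      disjoint_left, mem_image, not_exists]
    exact ⟨fun h a ha j hj => h j (hj ▸ ha), fun h j hj => h hj j rfl⟩
  simp only [← sum_filter, hfilter, sum_powerset_neg_one_pow_card, compl_eq_empty_iff,
    eq_univ_iff_forall, mem_image, mem_univ, true_and]
  exact if_congr Iff.rfl rfl rfl

namespace MultilinearMap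

variable {R M V : Type*} [Semiring R] [AddCommMonoid M] [AddCommGroup V] [Module R M] [Module R V]
  {n : ℕ}

theorem sum_neg_one_pow_card_smul_apply_const_eq_factorial_smul
    (B : MultilinearMap R (fun _ : Fin n => M) V)
    (hB : ∀ (σ : Equiv.Perm (Fin n)) v, B (v ∘ σ) = B v) (v : Fin n → M) :
    ∑ δ : Finset (Fin n), (-1 : ℤ) ^ #δ • B (fun _ => ∑ i ∈ δᶜ, v i) = n ! • B v := by
  calc ∑ δ : Finset (Fin n), (-1 : ℤ) ^ #δ • B (fun _ => ∑ i ∈ δᶜ, v i)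
      = ∑ r : Fin n → Fin n, ∑ δ : Finset (Fin n),
          (if ∀ j, r j ∉ δ then (-1 : ℤ) ^ #δ else 0) • B (v ∘ r) := by
        rw [Finset.sum_comm]
        refine Finset.sum_congr rfl fun δ _ => ?_
        have hpi : Fintype.piFinset (fun _ : Fin n => δᶜ) =
            univ.filter (fun r => ∀ j, r j ∉ δ) := by
          ext r; simp [Fintype.mem_piFinset]
        simp only [ite_smul, zero_smul, ← sum_filter, ← hpi]
        rw [B.map_sum_finset (fun _ i => v i) (fun _ => δᶜ), Finset.smul_sum]
        rfl
    _ = ∑ r : Fin n → Fin n, if Surjective r then B (v ∘ r) else 0 := by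
        refine Finset.sum_congr rfl fun r _ => ?_
        rw [← Finset.sum_smul, ← boole_smul (M₀ := ℤ)]
        congr 1
        convert Fintype.sum_ite_forall_notMem_neg_one_pow_card r
    _ = ∑ σ : Equiv.Perm (Fin n), B (v ∘ σ) := by
        have himage : univ.filter (fun r : Fin n → Fin n => Surjective r) =
            univ.image (fun σ : Equiv.Perm (Fin n) => ⇑σ) := by
          ext r
          simp only [mem_filter, mem_univ, true_and, mem_image]
          refine ⟨fun hr =>
            ⟨Equiv.ofBijective r ⟨Finite.injective_iff_surjective.2 hr, hr⟩, rfl⟩, ?_⟩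
          rintro ⟨σ, rfl⟩
          exact σ.surjective
        rw [← sum_filter, himage, sum_image fun _ _ _ _ h => DFunLike.coe_injective h]
    _ = n ! • B v := by
        simp [hB, Fintype.card_perm]

theorem eq_zero_of_symmetric_of_apply_const [Module ℚ V]
    (B : MultilinearMap R (fun _ : Fin n => M) V)
    (hB : ∀ (σ : Equiv.Perm (Fin n)) v, B (v ∘ σ) = B v) (hdiag : ∀ t, B (fun _ => t) = 0) :
    B = 0 := by
  ext v
  have h : (n ! : ℚ) • B v = 0 := by
    rw [Nat.cast_smul_eq_nsmul, ← sum_neg_one_pow_card_smul_apply_const_eq_factorial_smul B hB]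
    simp [hdiag]
  exact (smul_eq_zero.mp h).resolve_left (by positivity)

end MultilinearMap

section GroupRing

variable {A X : Type*} [CommRing A] [AddCommGroup X] (e : Multiplicative X →* A)

lemma map_ofAdd_add_sub_one (a b : X) :
    e (ofAdd (a + b)) - 1 =
      (e (ofAdd a) - 1) + (e (ofAdd b) - 1) + (e (ofAdd a) - 1) * (e (ofAdd b) - 1) := by
  rw [ofAdd_add, map_mul]; ring

lemma map_ofAdd_neg_sub_one (a : X) :
    e (ofAdd (-a)) - 1 = -e (ofAdd (-a)) * (e (ofAdd a) - 1) := by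
  have h : e (ofAdd (-a)) * e (ofAdd a) = 1 := by
    rw [← map_mul, ← ofAdd_add, neg_add_cancel, ofAdd_zero, map_one]
  linear_combination h

lemma sub_one_dvd_map_ofAdd_zsmul_sub_one (u : X) (k : ℤ) :
    e (ofAdd u) - 1 ∣ e (ofAdd (k • u)) - 1 := by
  have hnat : ∀ m : ℕ, e (ofAdd u) - 1 ∣ e (ofAdd (m • u)) - 1 := fun m => by
    simpa [ofAdd_nsmul, map_pow] using sub_dvd_pow_sub_pow (e (ofAdd u)) 1 m
  obtain ⟨m, rfl | rfl⟩ := k.eq_nat_or_neg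
  · simpa using hnat m
  · rw [neg_smul, map_ofAdd_neg_sub_one, natCast_zsmul]
    exact (hnat m).mul_left _

lemma map_ofAdd_sub_one_mem_span_of_mem_closure {ι : Type*} {h : ι → X} {g : X}
    (hg : g ∈ AddSubgroup.closure (Set.range h)) :
    e (ofAdd g) - 1 ∈ Ideal.span (Set.range fun i => e (ofAdd (h i)) - 1) := by
  induction hg using AddSubgroup.closure_induction with
  | mem x hx =>
    obtain ⟨i, rfl⟩ := hx
    exact Ideal.subset_span ⟨i, rfl⟩
  | zero => simp
  | add a b _ _ ha hb =>
    rw [map_ofAdd_add_sub_one]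
    exact add_mem (add_mem ha hb) (Ideal.mul_mem_left _ _ hb)
  | neg a _ ha =>
    rw [map_ofAdd_neg_sub_one]
    exact Ideal.mul_mem_left _ _ ha

variable [Algebra ℚ A] {J : Ideal A}

lemma prod_map_ofAdd_sub_one_mem_of_succ {s n : ℕ} (hsn : s ≤ n) {G : AddSubgroup X}
    (hJ : ∀ t ∈ G, (e (ofAdd t) - 1) ^ s ∈ J)
    (hsucc : ∀ w : Fin (n + 1) → G, ∏ j, (e (ofAdd (w j : X)) - 1) ∈ J) (v : Fin n → G) :
    ∏ j, (e (ofAdd (v j : X)) - 1) ∈ J := by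
  set u : G → A := fun t => e (ofAdd (t : X)) - 1 with hu
  have hupdate : ∀ [DecidableEq (Fin n)] (v : Fin n → G) (i : Fin n) (x : G),
      ∏ j, u (update v i x j) = u x * ∏ j ∈ univ \ {i}, u (v j) := fun v i x => by
    simp only [apply_update (fun _ => u), prod_update_of_mem (mem_univ i)]
  -- additive modulo `J`: the cross term of `map_ofAdd_add_sub_one` is an `(n + 1)`-fold product
  let slice [DecidableEq (Fin n)] (v : Fin n → G) (i : Fin n) : G →+ A ⧸ J :=
    AddMonoidHom.mk' (fun x => Ideal.Quotient.mk J (∏ j, u (update v i x j))) fun a b => by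
      rw [← map_add, Ideal.Quotient.mk_eq_mk_iff_sub_mem, hupdate, hupdate, hupdate]
      have hab : u a * ∏ j, u (update v i b j) ∈ J := by
        simpa only [Fin.prod_univ_succ, Fin.cons_zero, Fin.cons_succ] using
          hsucc (Fin.cons a (update v i b))
      rw [hupdate] at hab
      convert hab using 1
      simp only [hu, AddSubgroup.coe_add, map_ofAdd_add_sub_one]
      ring
  let B : MultilinearMap ℕ (fun _ : Fin n => G) (A ⧸ J) :=
    { toFun := fun v => Ideal.Quotient.mk J (∏ j, u (v j))
      map_update_add' := by intro _ v i a b; convert (slice v i).map_add a b <;> rfl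
      map_update_smul' := by intro _ v i c a; convert (slice v i).map_nsmul c a <;> rfl }
  have hB : B = 0 := by
    refine MultilinearMap.eq_zero_of_symmetric_of_apply_const B (fun σ w => ?_) fun t => ?_
    · exact congrArg (Ideal.Quotient.mk J) (Equiv.prod_comp σ fun j => u (w j))
    · refine Ideal.Quotient.eq_zero_iff_mem.2 ?_
      rw [prod_const, card_univ, Fintype.card_fin, ← Nat.sub_add_cancel hsn, pow_add]
      exact Ideal.mul_mem_left _ _ (hJ t t.2)
  exact Ideal.Quotient.eq_zero_iff_mem.1 (congrArg (· v) hB)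

theorem prod_map_ofAdd_sub_one_mem {s : ℕ} (hJ : ∀ t, (e (ofAdd t) - 1) ^ s ∈ J)
    (h : Fin s → X) : ∏ i, (e (ofAdd (h i)) - 1) ∈ J := by
  set G := AddSubgroup.closure (Set.range h)
  set I := Ideal.span (Set.range fun i => e (ofAdd (h i)) - 1)
  obtain ⟨N, hN⟩ : ∃ N, I ^ N ≤ J :=
    Ideal.exists_pow_le_of_le_radical_of_fg
      (Ideal.span_le.2 (Set.range_subset_iff.2 fun i => ⟨s, hJ (h i)⟩))
      (Submodule.fg_span (Set.finite_range _))
  have hbase : ∀ w : Fin (max N s) → G, ∏ j, (e (ofAdd (w j : X)) - 1) ∈ J := fun w => by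
    refine hN (Ideal.pow_le_pow_right (le_max_left N s) ?_)
    simpa using Ideal.prod_mem_prod (s := univ) (I := fun _ => I)
      fun j _ => map_ofAdd_sub_one_mem_span_of_mem_closure e (w j).2
  have hall := Nat.decreasingInduction'
    (P := fun m => ∀ w : Fin m → G, ∏ j, (e (ofAdd (w j : X)) - 1) ∈ J)
    (fun k _ hsk hsucc => prod_map_ofAdd_sub_one_mem_of_succ e hsk (fun t _ => hJ t) hsucc)
    (le_max_right N s) hbase
  exact hall fun i => ⟨h i, AddSubgroup.subset_closure ⟨i, rfl⟩⟩

end GroupRing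

section Translation

variable {X Y : Type*} [AddCommGroup X] [AddCommGroup Y] [Module ℚ Y]

def translation : Representation ℚ (Multiplicative X) (X → Y) where
  toFun c := LinearMap.funLeft ℚ Y (· + c.toAdd)
  map_one' := by ext; simp
  map_mul' a b := by ext; simp [add_assoc]

def translationAnnihilator (f : X → Y) : Ideal (MonoidAlgebra ℚ (Multiplicative X)) where
  carrier := {a | translation.asAlgebraHom a f = 0}
  add_mem' ha hb := by simp_all
  zero_mem' := by simp
  smul_mem' c a ha := by simp_all [smul_eq_mul, Module.End.mul_apply]

lemma mem_translationAnnihilator {f : X → Y} {a : MonoidAlgebra ℚ (Multiplicative X)} :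
    a ∈ translationAnnihilator f ↔ translation.asAlgebraHom a f = 0 :=
  Iff.rfl

lemma coe_translation_of_sub_one (t : X) :
    ⇑(translation.asAlgebraHom (MonoidAlgebra.of ℚ _ (ofAdd t) - 1) : Module.End ℚ (X → Y)) =
      dd t := by
  ext F x
  simp [translation, dd]

lemma iterate_dd_eq_asAlgebraHom (t : X) (n : ℕ) (F : X → Y) :
    (dd t)^[n] F = translation.asAlgebraHom ((MonoidAlgebra.of ℚ _ (ofAdd t) - 1) ^ n) F := by
  rw [map_pow, Module.End.pow_apply, coe_translation_of_sub_one]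

lemma ddIter_eq_asAlgebraHom (l : List X) (F : X → Y) :
    ddIter l F =
      translation.asAlgebraHom (l.map fun t => MonoidAlgebra.of ℚ _ (ofAdd t) - 1).prod F := by
  induction l with
  | nil => simp [ddIter]
  | cons t l ih =>
    rw [List.map_cons, List.prod_cons, map_mul, Module.End.mul_apply, ← ih,
      coe_translation_of_sub_one]
    rfl

theorem ddIter_ofFn_eq_zero_of_forall_iterate_dd_eq_zero {f : X → Y} {s : ℕ}
    (hf : ∀ t, (dd t)^[s] f = 0) (h : Fin s → X) : ddIter (List.ofFn h) f = 0 := by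
  rw [ddIter_eq_asAlgebraHom, List.map_ofFn, List.prod_ofFn, ← mem_translationAnnihilator]
  refine prod_map_ofAdd_sub_one_mem _ (fun t => ?_) h
  rw [mem_translationAnnihilator, ← iterate_dd_eq_asAlgebraHom, hf]

theorem iterate_dd_zsmul_eq_zero {f : X → Y} {n : ℕ} {u : X} (hu : (dd u)^[n] f = 0) (k : ℤ) :
    (dd (k • u))^[n] f = 0 := by
  rw [iterate_dd_eq_asAlgebraHom, ← mem_translationAnnihilator] at hu ⊢
  exact Ideal.mem_of_dvd _ (pow_dvd_pow_of_dvd (sub_one_dvd_map_ofAdd_zsmul_sub_one _ u k) n) hu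

end Translation

section Archimedean

variable {K : Type*} [Field K] [LinearOrder K] [IsStrictOrderedRing K] [Archimedean K]

lemma exists_mem_Ioo_zsmul_eq {δ : K} (hδ : 0 < δ) {t : K} (ht : t ≠ 0) :
    ∃ k : ℤ, ∃ u ∈ Set.Ioo (-δ) 0, t = k • u := by
  obtain ⟨n, hn⟩ := exists_nat_gt (|t| / δ)
  have hn0 : (0 : K) < n := lt_of_le_of_lt (by positivity) hn
  have hsmall : |t| / n < δ := by
    rw [div_lt_iff₀ hn0]; rw [div_lt_iff₀ hδ] at hn; linarith
  rcases ht.lt_or_gt with hneg | hpos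
  · refine ⟨n, t / n, ⟨?_, div_neg_of_neg_of_pos hneg hn0⟩, ?_⟩
    · rw [abs_of_neg hneg, neg_div] at hsmall; linarith
    · rw [zsmul_eq_mul]; push_cast; field_simp
  · refine ⟨-n, -t / n, ⟨?_, div_neg_of_neg_of_pos (neg_neg_of_pos hpos) hn0⟩, ?_⟩
    · rw [abs_of_pos hpos] at hsmall; rw [neg_div]; linarith
    · rw [zsmul_eq_mul]; push_cast; field_simp

theorem iterate_dd_eq_zero_of_forall_mem_Ioo {Y : Type*} [AddCommGroup Y] [Module ℚ Y]
    {f : K → Y} {s : ℕ} (hs : 1 ≤ s) {δ : K} (hδ : 0 < δ)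
    (H : ∀ u ∈ Set.Ioo (-δ) 0, (dd u)^[s] f = 0) (t : K) : (dd t)^[s] f = 0 := by
  rcases eq_or_ne t 0 with rfl | ht
  · simp [iterate_dd_eq_asAlgebraHom, zero_pow (Nat.one_le_iff_ne_zero.1 hs)]
  · obtain ⟨k, u, hu, rfl⟩ := exists_mem_Ioo_zsmul_eq hδ ht
    exact iterate_dd_zsmul_eq_zero (H u hu) k

end Archimedean

theorem stmt6 {Y : Type*} [AddCommGroup Y] [Module ℚ Y] (f : ℝ → Y)
    (s : ℕ) (hs : 1 ≤ s) (δ : ℝ) (hδ : 0 < δ)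
    (H : ∀ x : ℝ, ∀ h ∈ Set.Ioo (-δ) (0 : ℝ), (dd h)^[s] f x = 0) :
    ∀ (x : ℝ) (h : Fin s → ℝ), ddIter (List.ofFn h) f x = 0 := by
  intro x h
  have hsmall : ∀ u ∈ Set.Ioo (-δ) 0, (dd u)^[s] f = 0 := fun u hu => funext fun y => H y u hu
  rw [ddIter_ofFn_eq_zero_of_forall_iterate_dd_eq_zero
    (iterate_dd_eq_zero_of_forall_mem_Ioo hs hδ hsmall) h]
  rfl
end

section
/- Let X and Y be rational vector spaces, f : X → Y, s ≥ 1, and let B ⊆ X be naturally absorbent (for every x ∈ X there is a positive integer k with x ∈ kB). If Δ_{h_1} ⋯ Δ_{h_s} f(x) = 0 for all x ∈ X and all h_1, ..., h_s ∈ B, then Δ_{h_1} ⋯ Δ_{h_s} f(x) = 0 for all x, h_1, ..., h_s ∈ X. -/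
/-!
Writing `h = k • z` with `z ∈ B`, telescoping gives `Δ_h g x = ∑_{j<k} Δ_z g (x + j • z)`.
Difference operators commute with translations and finite sums, so an iterated difference
with step `h` is a sum of translates of the same iterated difference with step `z` instead.
Replacing the steps one at a time by elements of `B` therefore reduces the claim to the
hypothesis.
-/

section Basic

variable {X Y : Type*} [Add X] [Sub Y]

@[simp]
lemma ddIter_nil (f : X → Y) : ddIter [] f = f := rfl

@[simp]
lemma ddIter_cons (a : X) (l : List X) (f : X → Y) : ddIter (a :: l) f = dd a (ddIter l f) :=
  rfl

lemma ddIter_append (l₁ l₂ : List X) (f : X → Y) :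
    ddIter (l₁ ++ l₂) f = ddIter l₁ (ddIter l₂ f) :=
  List.foldr_append ..

end Basic

section AddCommGroup

variable {X Y : Type*} [AddCommGroup X] [AddCommGroup Y]

lemma dd_nsmul (z : X) (k : ℕ) (g : X → Y) (x : X) :
    dd (k • z) g x = ∑ j ∈ Finset.range k, dd z g (x + j • z) := by
  induction k with
  | zero => simp [dd]
  | succ k ih =>
    rw [Finset.sum_range_succ, ← ih]
    simp only [dd, succ_nsmul, ← add_assoc]
    abel

lemma ddIter_comp_add_right (l : List X) (g : X → Y) (c x : X) :
    ddIter l (fun y => g (y + c)) x = ddIter l g (x + c) := by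
  induction l generalizing x with
  | nil => rfl
  | cons a l ih => simp only [ddIter_cons, dd, ih, add_right_comm]

lemma ddIter_finset_sum {ι : Type*} (t : Finset ι) (l : List X) (G : ι → X → Y) (x : X) :
    ddIter l (fun y => ∑ j ∈ t, G j y) x = ∑ j ∈ t, ddIter l (G j) x := by
  induction l generalizing x with
  | nil => rfl
  | cons a l ih => simp only [ddIter_cons, dd, ih, Finset.sum_sub_distrib]

lemma ddIter_append_nsmul_cons_eq_zero {f : X → Y} {l₁ l₂ : List X} {z : X}
    (hz : ∀ x, ddIter (l₁ ++ z :: l₂) f x = 0) (k : ℕ) (x : X) :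
    ddIter (l₁ ++ (k • z) :: l₂) f x = 0 := by
  have hexp : ddIter (k • z :: l₂) f =
      fun y => ∑ j ∈ Finset.range k, ddIter (z :: l₂) f (y + j • z) :=
    funext fun y => dd_nsmul z k _ y
  rw [ddIter_append, hexp, ddIter_finset_sum]
  refine Finset.sum_eq_zero fun j _ => ?_
  rw [ddIter_comp_add_right, ← ddIter_append]
  exact hz _

theorem ddIter_eq_zero_of_forall_mem {f : X → Y} {B : Set X}
    (hB : ∀ a, ∃ k : ℕ, ∃ z ∈ B, a = k • z) {n : ℕ}
    (hf : ∀ l : List X, l.length = n → (∀ z ∈ l, z ∈ B) → ∀ x, ddIter l f x = 0)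
    (l : List X) (hl : l.length = n) (x : X) : ddIter l f x = 0 := by
  suffices key : ∀ l₁ l₂ : List X, l₁.length + l₂.length = n → (∀ z ∈ l₂, z ∈ B) →
      ∀ x, ddIter (l₁ ++ l₂) f x = 0 by
    simpa using key l [] (by simpa) (by simp) x
  intro l₁
  induction l₁ using List.reverseRecOn with
  | nil => intro l₂ hlen; simpa using hf l₂ (by simpa using hlen)
  | append_singleton l₁ a ih =>
    intro l₂ hlen hl₂ x
    obtain ⟨k, z, hzB, rfl⟩ := hB a
    rw [List.append_assoc, List.singleton_append]
    refine ddIter_append_nsmul_cons_eq_zero (fun y => ih (z :: l₂) ?_ ?_ y) k x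
    · simp only [List.length_append, List.length_cons, List.length_nil] at hlen ⊢
      omega
    · simpa [hzB] using hl₂

end AddCommGroup

theorem stmt9_general {X Y : Type*} [AddCommGroup X] [Module ℚ X] [AddCommGroup Y]
    (f : X → Y) (s : ℕ) (B : Set X)
    (habs : ∀ x : X, ∃ k : ℕ, 0 < k ∧ ∃ z ∈ B, x = (k : ℚ) • z)
    (H : ∀ x : X, ∀ h : Fin s → X, (∀ k, h k ∈ B) → ddIter (List.ofFn h) f x = 0) :
    ∀ (x : X) (h : Fin s → X), ddIter (List.ofFn h) f x = 0 := by
  intro x h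
  refine ddIter_eq_zero_of_forall_mem (B := B) (fun a => ?_) (fun l hl hlB y => ?_)
    (List.ofFn h) List.length_ofFn x
  · obtain ⟨k, -, z, hzB, rfl⟩ := habs a
    exact ⟨k, z, hzB, Nat.cast_smul_eq_nsmul ℚ k z⟩
  · subst hl
    simpa using H y l.get fun i => hlB _ (l.get_mem i)

theorem stmt9 {X Y : Type*} [AddCommGroup X] [Module ℚ X] [AddCommGroup Y] [Module ℚ Y]
    (f : X → Y) (s : ℕ) (hs : 1 ≤ s) (B : Set X)
    (habs : ∀ x : X, ∃ k : ℕ, 0 < k ∧ ∃ z ∈ B, x = (k : ℚ) • z)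
    (H : ∀ x : X, ∀ h : Fin s → X, (∀ k, h k ∈ B) → ddIter (List.ofFn h) f x = 0) :
    ∀ (x : X) (h : Fin s → X), ddIter (List.ofFn h) f x = 0 :=
  stmt9_general f s B habs H
end

section
/- Let K be a valued field containing ℚ_p with continuous inclusion ℚ_p ↪ K, and let f : ℚ_p → K be continuous. Then f satisfies Δ_h^{n+1} f(x) = 0 for all x, h ∈ ℚ_p if and only if there exist constants a_0, ..., a_n ∈ K such that f(x) = a_0 + a_1 x + ⋯ + a_n x^n for all x ∈ ℚ_p. -/
open Polynomial Finset

section FwdDiff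

variable {M G : Type*} [AddCommMonoid M] [AddCommGroup G]

lemma fwdDiff_iter_sub (h : M) (f g : M → G) (n : ℕ) :
    (fwdDiff h)^[n] (f - g) = (fwdDiff h)^[n] f - (fwdDiff h)^[n] g := by
  simpa only [fwdDiff_aux.coe_fwdDiffₗ_pow] using map_sub (fwdDiff_aux.fwdDiffₗ M G h ^ n) f g

lemma fwdDiff_iter_apply_eq_of_apply_add_nsmul_eq {M' : Type*} [AddCommMonoid M']
    {f : M → G} {g : M' → G} {h x : M} {h' y : M'}
    (hfg : ∀ k : ℕ, f (x + k • h) = g (y + k • h')) (n : ℕ) :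
    (fwdDiff h)^[n] f x = (fwdDiff h')^[n] g y := by
  simp only [fwdDiff_iter_eq_sum_shift, hfg]

lemma fwdDiff_iter_eq_zero_of_le {h : M} {f : M → G} {n m : ℕ} (hf : (fwdDiff h)^[n] f = 0)
    (hnm : n ≤ m) : (fwdDiff h)^[m] f = 0 := by
  obtain ⟨k, rfl⟩ := Nat.exists_eq_add_of_le hnm
  rw [add_comm, Function.iterate_add_apply, hf]
  exact Function.iterate_fixed (fwdDiff_const h 0) k

end FwdDiff

lemma fwdDiff_iter_eval_comp_eq_zero {M R : Type*} [AddCommMonoid M] [CommRing R] (ι : M →+ R)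
    {P : R[X]} {n : ℕ} (hP : P.natDegree < n) (h : M) :
    (fwdDiff h)^[n] (fun x => P.eval (ι x)) = 0 := by
  funext x
  set Q := P.comp (C (ι h) * X + C (ι x))
  have hQ : Q.natDegree < n := by
    refine (natDegree_comp_le.trans ?_).trans_lt hP
    simpa using Nat.mul_le_mul_left P.natDegree (natDegree_linear_le (a := ι h) (b := ι x))
  rw [fwdDiff_iter_apply_eq_of_apply_add_nsmul_eq (g := Q.eval) (h' := 1) (y := 0)
    (fun k => by simp [Q, eval_comp, nsmul_eq_mul, add_comm, mul_comm (k : R)]),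
    fwdDiff_iter_eq_zero_of_degree_lt hQ]
  rfl

section CharZero

variable {M K : Type*} [AddCommMonoid M] [Field K] [CharZero K]

lemma exists_natDegree_le_apply_add_nsmul_eq_eval {f : M → K} {h : M} {n : ℕ}
    (hf : (fwdDiff h)^[n + 1] f = 0) (x : M) :
    ∃ Q : K[X], Q.natDegree ≤ n ∧ ∀ k : ℕ, f (x + k • h) = Q.eval (k : K) := by
  refine ⟨∑ j ∈ range (n + 1), C ((fwdDiff h)^[j] f x / j.factorial) * descPochhammer K j, ?_,
    fun k => ?_⟩
  · refine natDegree_sum_le_of_forall_le _ _ fun j hj => ?_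
    refine (natDegree_C_mul_le _ _).trans ?_
    rw [descPochhammer_natDegree]
    exact Nat.lt_succ_iff.mp (mem_range.mp hj)
  · calc f (x + k • h) = ∑ j ∈ range (k + 1), k.choose j • (fwdDiff h)^[j] f x :=
          shift_eq_sum_fwdDiff_iter h f k x
      _ = ∑ j ∈ range (k + n + 1), k.choose j • (fwdDiff h)^[j] f x :=
          sum_subset (range_subset_range.mpr (by omega)) fun j _ hj => by
            rw [Nat.choose_eq_zero_of_lt (by simp at hj; omega), zero_smul]
      _ = ∑ j ∈ range (n + 1), k.choose j • (fwdDiff h)^[j] f x :=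
          (sum_subset (range_subset_range.mpr (by omega)) fun j _ hj => by
            rw [fwdDiff_iter_eq_zero_of_le hf (by simp at hj; omega), Pi.zero_apply,
              smul_zero]).symm
      _ = _ := by
          rw [eval_finsetSum]
          refine sum_congr rfl fun j _ => ?_
          rw [eval_mul, eval_C, descPochhammer_eval_eq_descFactorial,
            Nat.descFactorial_eq_factorial_mul_choose, nsmul_eq_mul, Nat.cast_mul]
          have : (j.factorial : K) ≠ 0 := Nat.cast_ne_zero.mpr j.factorial_ne_zero
          field_simp

lemma apply_add_nsmul_eq_zero_of_infinite {f : M → K} {h : M} {n : ℕ}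
    (hf : (fwdDiff h)^[n + 1] f = 0) {x : M} (hzero : {k : ℕ | f (x + k • h) = 0}.Infinite)
    (k : ℕ) : f (x + k • h) = 0 := by
  obtain ⟨Q, -, hQ⟩ := exists_natDegree_le_apply_add_nsmul_eq_eval hf x
  have hQ0 : Q = 0 := Q.eq_zero_of_infinite_isRoot <|
    (hzero.image Nat.cast_injective.injOn).mono <| by
      rintro _ ⟨k, hk, rfl⟩
      simpa [IsRoot, ← hQ] using hk
  rw [hQ, hQ0, eval_zero]

lemma apply_ratCast_eq_zero {F : Type*} [DivisionRing F] [CharZero F] {g : F → K} {n : ℕ}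
    (hg : ∀ h, (fwdDiff h)^[n + 1] g = 0) (hnat : ∀ k : ℕ, g k = 0) (q : ℚ) : g q = 0 := by
  have hnonneg : ∀ r : ℚ, 0 ≤ r → g r = 0 := by
    intro r hr
    have hden : (r.den : F) ≠ 0 := Nat.cast_ne_zero.mpr r.den_nz
    have hzero : {k : ℕ | g (0 + k • (r.den : F)⁻¹) = 0}.Infinite :=
      (Set.infinite_range_of_injective (mul_left_injective₀ r.den_nz)).mono <| by
        rintro _ ⟨j, rfl⟩
        simp [hden, hnat]
    have hnum : (r.num.toNat : F) = r.num := by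
      exact_mod_cast congrArg (Int.cast (R := F)) (Int.toNat_of_nonneg (Rat.num_nonneg.mpr hr))
    rw [Rat.cast_def, div_eq_mul_inv, ← hnum]
    simpa using apply_add_nsmul_eq_zero_of_infinite (hg _) hzero r.num.toNat
  have hzero : {k : ℕ | g (q + k • (1 : F)) = 0}.Infinite :=
    (Set.Ici_infinite ⌈-q⌉₊).mono fun k hk => by
      have : (⌈-q⌉₊ : ℚ) ≤ k := Nat.cast_le.mpr hk
      simpa using hnonneg (q + k) (by linarith [Nat.le_ceil (-q)])
  simpa using apply_add_nsmul_eq_zero_of_infinite (hg 1) hzero 0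

end CharZero

lemma exists_fin_sum_mul_pow_iff {α R : Type*} [CommRing R] (f φ : α → R) (n : ℕ) :
    (∃ a : Fin (n + 1) → R, ∀ x, f x = ∑ i : Fin (n + 1), a i * φ x ^ (i : ℕ)) ↔
      ∃ P : R[X], P.natDegree ≤ n ∧ ∀ x, f x = P.eval (φ x) := by
  constructor
  · rintro ⟨a, ha⟩
    refine ⟨∑ i : Fin (n + 1), C (a i) * X ^ (i : ℕ), ?_,
      fun x => by simp [ha, eval_finsetSum]⟩
    exact natDegree_sum_le_of_forall_le _ _ fun i _ =>
      (natDegree_C_mul_X_pow_le _ _).trans (Nat.lt_succ_iff.mp i.isLt)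
  · rintro ⟨P, hP, hfP⟩
    refine ⟨fun i => P.coeff i, fun x => ?_⟩
    rw [hfP, eval_eq_sum_range' (hP.trans_lt n.lt_add_one),
      Fin.sum_univ_eq_sum_range (fun i => P.coeff i * φ x ^ i)]

theorem stmt11 {p : ℕ} [Fact p.Prime] {K : Type*} [NormedField K]
    (ι : ℚ_[p] →+* K) (hι : Continuous ι)
    (f : ℚ_[p] → K) (hf : Continuous f) (n : ℕ) :
    (∀ x h : ℚ_[p], (dd h)^[n + 1] f x = 0) ↔
      ∃ a : Fin (n + 1) → K, ∀ x : ℚ_[p], f x = ∑ i : Fin (n + 1), a i * (ι x) ^ (i : ℕ) := by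
  have : CharZero K := (RingHom.charZero_iff ι.injective).mp inferInstance
  have hPΔ : ∀ P : K[X], P.natDegree ≤ n →
      ∀ h, (fwdDiff h)^[n + 1] (fun x => P.eval (ι x)) = 0 :=
    fun P hP => fwdDiff_iter_eval_comp_eq_zero ι.toAddMonoidHom (hP.trans_lt n.lt_add_one)
  rw [exists_fin_sum_mul_pow_iff]
  constructor
  · intro H
    have hfΔ : ∀ h, (fwdDiff h)^[n + 1] f = 0 := fun h => funext fun x => H x h
    obtain ⟨P, hPn, hP⟩ := exists_natDegree_le_apply_add_nsmul_eq_eval (hfΔ 1) 0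
    have hrat : ∀ q : ℚ, f q = P.eval (ι q) := fun q => sub_eq_zero.mp <|
      apply_ratCast_eq_zero (g := f - fun x => P.eval (ι x))
        (fun h => by rw [fwdDiff_iter_sub, hfΔ, hPΔ P hPn, sub_zero])
        (fun k => by simpa [sub_eq_zero] using hP k) q
    exact ⟨P, hPn, congrFun <|
      (Padic.denseRange_ratCast p).equalizer hf (P.continuous.comp hι) (funext hrat)⟩
  · rintro ⟨P, hPn, hP⟩ x h
    rw [funext hP]
    exact congrFun (hPΔ P hPn h) x
end

section
/- Let Y be a rational vector space, f : ℚ_p → Y, N ∈ ℤ, a ∈ ℚ_p. If Δ_h f(x) = 0 for all x ∈ ℚ_p and all h ∉ a + p^{-N} ℤ_p, then Δ_h f(x) = 0 for all x, h ∈ ℚ_p, i.e., f is constant. -/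
theorem stmt17 {p : ℕ} [Fact p.Prime] {Y : Type*} [AddCommGroup Y] [Module ℚ Y]
    (f : ℚ_[p] → Y) (N : ℤ) (a : ℚ_[p])
    (H : ∀ x h : ℚ_[p], (p : ℝ) ^ N < ‖h - a‖ → dd h f x = 0) :
    (∀ x h : ℚ_[p], dd h f x = 0) ∧ (∀ x y : ℚ_[p], f x = f y) := by
  have hp1 : (1 : ℝ) < (p : ℝ) := by exact_mod_cast (Fact.out : p.Prime).one_lt
  have key : ∀ x h : ℚ_[p], f (x + h) = f x := by
    intro x h
    obtain ⟨M, hM⟩ := pow_unbounded_of_one_lt (max ((p : ℝ) ^ N) ‖h - 2 * a‖) hp1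
    set t : ℚ_[p] := (p : ℚ_[p]) ^ (-(M : ℤ)) with ht_def
    have htne : t ≠ 0 := zpow_ne_zero _ (by exact_mod_cast (Fact.out : p.Prime).ne_zero)
    have ht : ‖t‖ = (p : ℝ) ^ (M : ℕ) := by
      rw [ht_def, norm_zpow, Padic.norm_p, inv_zpow, ← zpow_neg, neg_neg, zpow_natCast]
    have ht1 : (p : ℝ) ^ N < ‖t‖ := by
      rw [ht]; exact lt_of_le_of_lt (le_max_left _ _) hM
    have ht2 : ‖h - 2 * a‖ < ‖t‖ := by
      rw [ht]; exact lt_of_le_of_lt (le_max_right _ _) hM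
    have h1 : (p : ℝ) ^ N < ‖(a + t) - a‖ := by simpa using ht1
    have h2 : (p : ℝ) ^ N < ‖(h - a - t) - a‖ := by
      have heq : (h - a - t) - a = (h - 2 * a) + (-t) := by ring
      have hne : ‖h - 2 * a‖ ≠ ‖-t‖ := by rw [norm_neg]; exact ne_of_lt ht2
      rw [heq, Padic.add_eq_max_of_ne hne, norm_neg, max_eq_right (le_of_lt ht2)]
      exact ht1
    have e1 := H x (a + t) h1
    have e2 := H (x + (a + t)) (h - a - t) h2
    simp only [dd, sub_eq_zero] at e1 e2
    have : x + (a + t) + (h - a - t) = x + h := by ring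
    rw [this] at e2
    rw [e2, e1]
  refine ⟨fun x h => ?_, fun x y => ?_⟩
  · simp [dd, key]
  · have := key y (x - y)
    simpa using this
end

section
/- Define f : ℝ → ℝ by f(x) = x if x ∈ ℚ and f(x) = x² if x ∉ ℚ. Then Δ_{h_1} Δ_{h_2} Δ_{h_3} f(x) = 0 for all x ∈ ℝ and all h_1, h_2, h_3 ∈ ℚ, but there exist x, h ∈ ℝ with Δ_h Δ_h Δ_h f(x) ≠ 0 (indeed f is not a polynomial function and satisfies no Fréchet equation Δ_h^s f ≡ 0 on all of ℝ×ℝ). -/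
open Set

section Differences

variable {X Y : Type*}

theorem ddIter_eqOn [Add X] [Sub Y] {S : Set X} {hs : List X}
    (hS : ∀ h ∈ hs, ∀ y ∈ S, y + h ∈ S) {f g : X → Y} (hfg : EqOn f g S) :
    EqOn (ddIter hs f) (ddIter hs g) S := by
  induction hs with
  | nil => exact hfg
  | cons h hs ih =>
    intro y hy
    have ihS := ih fun h' h'mem => hS h' (List.mem_cons_of_mem h h'mem)
    change ddIter hs f (y + h) - ddIter hs f y = ddIter hs g (y + h) - ddIter hs g y
    rw [ihS (hS h List.mem_cons_self y hy), ihS hy]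

theorem dd_zero [Add X] [AddGroup Y] (h : X) : dd h (0 : X → Y) = 0 :=
  funext fun _ => sub_self 0

theorem dd_add [Add X] [AddCommGroup Y] (h : X) (f g : X → Y) :
    dd h (f + g) = dd h f + dd h g :=
  funext fun _ => add_sub_add_comm _ _ _ _

theorem iterate_dd_add [Add X] [AddCommGroup Y] (h : X) (n : ℕ) (f g : X → Y) :
    (dd h)^[n] (f + g) = (dd h)^[n] f + (dd h)^[n] g := by
  induction n generalizing f g with
  | zero => rfl
  | succ n ih => rw [Function.iterate_succ_apply, dd_add, ih]; rfl

theorem iterate_dd_eq_zero_of_le [Add X] [AddGroup Y] {h : X} {f : X → Y} {s t : ℕ}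
    (hs : (dd h)^[s] f = 0) (hst : s ≤ t) : (dd h)^[t] f = 0 := by
  obtain ⟨u, rfl⟩ := Nat.exists_eq_add_of_le hst
  rw [add_comm, Function.iterate_add_apply, hs]
  exact Function.iterate_fixed (dd_zero h) u

theorem iterate_dd_apply_of_eq_zero [AddMonoid X] [AddGroup Y] {e : X → Y} {h x : X} {s : ℕ}
    (he : ∀ k < s, e (x + k • h) = 0) : (dd h)^[s] e x = e (x + s • h) := by
  induction s generalizing e with
  | zero => simp
  | succ s ih =>
    have hshift (k : ℕ) : x + k • h + h = x + (k + 1) • h := by rw [add_assoc, succ_nsmul]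
    rw [Function.iterate_succ_apply, ih fun k hk => ?_]
    · change e (x + s • h + h) - e (x + s • h) = e (x + (s + 1) • h)
      rw [hshift, he s (Nat.lt_succ_self s), sub_zero]
    · change e (x + k • h + h) - e (x + k • h) = 0
      rw [hshift, he (k + 1) (by omega), he k (by omega), sub_zero]

end Differences

section Quadratic

variable {R : Type*} [CommRing R]

theorem ddIter_quadratic_eq_zero (a b c h₁ h₂ h₃ x : R) :
    ddIter [h₁, h₂, h₃] (fun y => a * y ^ 2 + b * y + c) x = 0 := by
  simp only [ddIter, List.foldr, dd]
  ring

theorem iterate_dd_quadratic_eq_zero (a b c h : R) {s : ℕ} (hs : 3 ≤ s) :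
    (dd h)^[s] (fun y => a * y ^ 2 + b * y + c) = 0 :=
  iterate_dd_eq_zero_of_le (s := 3) (funext fun x => ddIter_quadratic_eq_zero a b c h h h x) hs

end Quadratic

section RatIdIrratSquare

variable {f : ℝ → ℝ}

theorem ddIter_ratCast_eq_zero (hf1 : ∀ q : ℚ, f (q : ℝ) = (q : ℝ))
    (hf2 : ∀ x : ℝ, Irrational x → f x = x ^ 2) (x : ℝ) (h₁ h₂ h₃ : ℚ) :
    ddIter [(h₁ : ℝ), h₂, h₃] f x = 0 := by
  set S : Set ℝ := {y | ∃ q : ℚ, y = x + q}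
  have hS : ∀ h ∈ [(h₁ : ℝ), h₂, h₃], ∀ y ∈ S, y + h ∈ S := by
    have hstep (r : ℚ) : ∀ y ∈ S, y + r ∈ S := by
      rintro _ ⟨q, rfl⟩
      exact ⟨q + r, by push_cast; ring⟩
    simp only [List.mem_cons, List.not_mem_nil, or_false]
    rintro h (rfl | rfl | rfl) <;> exact hstep _
  have hquad : ∃ a b : ℝ, EqOn f (fun y => a * y ^ 2 + b * y + 0) S := by
    by_cases hx : Irrational x
    · exact ⟨1, 0, by rintro _ ⟨q, rfl⟩; simp [hf2 _ (hx.add_ratCast q)]⟩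
    · obtain ⟨r, rfl⟩ := not_not.mp hx
      exact ⟨0, 1, by rintro _ ⟨q, rfl⟩; simp [← Rat.cast_add, hf1]⟩
  obtain ⟨a, b, hab⟩ := hquad
  rw [ddIter_eqOn hS hab ⟨0, by simp⟩]
  exact ddIter_quadratic_eq_zero a b 0 _ _ _ x

theorem iterate_dd_sqrt_two_ne_zero (hf1 : ∀ q : ℚ, f (q : ℝ) = (q : ℝ))
    (hf2 : ∀ x : ℝ, Irrational x → f x = x ^ 2) {s : ℕ} (hs : 3 ≤ s) :
    (dd √2)^[s] f (2 - s * √2) ≠ 0 := by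
  set e : ℝ → ℝ := f - fun y => 1 * y ^ 2 + 0 * y + 0
  have he : ∀ k < s, e (2 - s * √2 + k • √2) = 0 := fun k hk => by
    have hirr : Irrational (2 - s * √2 + k • √2) := by
      rw [nsmul_eq_mul, show 2 - s * √2 + k * √2 = ((2 : ℚ) : ℝ) + ((k - s : ℤ) : ℝ) * √2 by
        push_cast; ring]
      exact (irrational_sqrt_two.intCast_mul (by omega)).ratCast_add 2
    change f _ - _ = 0
    rw [hf2 _ hirr]
    ring
  have hlast : 2 - s * √2 + s • √2 = ((2 : ℚ) : ℝ) := by rw [nsmul_eq_mul]; push_cast; ring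
  rw [← add_sub_cancel (fun y => 1 * y ^ 2 + 0 * y + 0) f, iterate_dd_add,
    iterate_dd_quadratic_eq_zero _ _ _ _ hs, zero_add, iterate_dd_apply_of_eq_zero he, hlast]
  change f _ - _ ≠ 0
  rw [hf1]
  norm_num

end RatIdIrratSquare

theorem stmt19 (f : ℝ → ℝ)
    (hf1 : ∀ q : ℚ, f (q : ℝ) = (q : ℝ))
    (hf2 : ∀ x : ℝ, Irrational x → f x = x ^ 2) :
    (∀ (x : ℝ) (h₁ h₂ h₃ : ℚ),
        dd (h₁ : ℝ) (dd (h₂ : ℝ) (dd (h₃ : ℝ) f)) x = 0) ∧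
    (∀ s : ℕ, ∃ x h : ℝ, (dd h)^[s] f x ≠ 0) := by
  refine ⟨ddIter_ratCast_eq_zero hf1 hf2, fun s => ?_⟩
  by_contra! hzero
  have hvanish : (dd √2)^[s + 3] f = 0 :=
    iterate_dd_eq_zero_of_le (funext fun x => hzero x √2) (Nat.le_add_right s 3)
  exact iterate_dd_sqrt_two_ne_zero hf1 hf2 (Nat.le_add_left 3 s) (congrFun hvanish _)
end
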